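/- Adversary lower bound for exact state conversion: let D be a finite set, X a finite-dimensional complex inner product space, O_x a unitary on X for each x ∈ D, and suppose a T-query quantum algorithm with oracle acting on X, with state space H, together with unit vectors ρ_x, σ_x ∈ H, satisfies A(O_x) ρ_x = σ_x for every x ∈ D. Then γ₂((⟨ρ_x, ρ_y⟩ − ⟨σ_x, σ_y⟩)_{x,y∈D} | (O_x − O_y)_{x,y∈D}) ≤ T, where the first family consists of complex scalars. -/

import Mathlib

noncomputable section

open scoped ENNReal ComplexOrder

/-- A linear endomorphism of a finite-dimensional complex inner product space is unitary. -/
def IsUnitaryMap {E : Type*} [NormedAddCommGroup E] [InnerProductSpace ℂ E]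
    [FiniteDimensional ℂ E] (f : E →ₗ[ℂ] E) : Prop :=
  LinearMap.adjoint f ∘ₗ f = LinearMap.id ∧ f ∘ₗ LinearMap.adjoint f = LinearMap.id

/-- Operator norm of a linear map between finite-dimensional inner product spaces. -/
noncomputable def opNorm {E F : Type*} [NormedAddCommGroup E] [InnerProductSpace ℂ E]
    [NormedAddCommGroup F] [InnerProductSpace ℂ F] [FiniteDimensional ℂ E]
    (f : E →ₗ[ℂ] F) : ℝ :=
  ‖LinearMap.toContinuousLinearMap f‖

/-- A complex scalar viewed as a linear map `ℂ → ℂ`. -/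
noncomputable def scalarMap (c : ℂ) : ℂ →ₗ[ℂ] ℂ := c • LinearMap.id

/-- The block-diagonal map `⊕ᵢ Δᵢ` on an `ℓ²`-direct sum of copies of a space. -/
noncomputable def piBlock {ι : Type*} [Fintype ι] {X₁ X₂ : Type*}
    [NormedAddCommGroup X₁] [InnerProductSpace ℂ X₁]
    [NormedAddCommGroup X₂] [InnerProductSpace ℂ X₂]
    (Δ : ι → (X₂ →ₗ[ℂ] X₁)) :
    PiLp 2 (fun _ : ι => X₂) →ₗ[ℂ] PiLp 2 (fun _ : ι => X₁) :=
  (WithLp.linearEquiv 2 ℂ (∀ _ : ι, X₁)).symm.toLinearMap ∘ₗ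
    (LinearMap.pi fun i => Δ i ∘ₗ LinearMap.proj i) ∘ₗ
      (WithLp.linearEquiv 2 ℂ (∀ _ : ι, X₂)).toLinearMap

/-- The relative `γ₂`-norm `γ₂(A | Δ)` of a family `A = (A_{xy} : Z₂ → Z₁)` relative to a
family `Δ = (Δ_{xy} : X₂ → X₁)`: the infimum over `k ∈ ℕ` and factorizations
`A_{xy} = Υ_x* ∘ (Δ_{xy} ⊗ id_{ℂᵏ}) ∘ Φ_y` of `max (max_x ‖Υ_x‖²) (max_y ‖Φ_y‖²)`,
where `X ⊗ ℂᵏ` is realized as the `ℓ²`-direct sum of `k` copies of `X`.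
The infimum of the empty set is `+∞`. -/
noncomputable def relGamma2 {D₁ D₂ : Type*} [Fintype D₁] [Fintype D₂]
    {X₁ X₂ Z₁ Z₂ : Type*}
    [NormedAddCommGroup X₁] [InnerProductSpace ℂ X₁] [FiniteDimensional ℂ X₁]
    [NormedAddCommGroup X₂] [InnerProductSpace ℂ X₂] [FiniteDimensional ℂ X₂]
    [NormedAddCommGroup Z₁] [InnerProductSpace ℂ Z₁] [FiniteDimensional ℂ Z₁]
    [NormedAddCommGroup Z₂] [InnerProductSpace ℂ Z₂] [FiniteDimensional ℂ Z₂]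
    (A : D₁ → D₂ → (Z₂ →ₗ[ℂ] Z₁)) (Δ : D₁ → D₂ → (X₂ →ₗ[ℂ] X₁)) : ℝ≥0∞ :=
  ⨅ (k : ℕ) (Υ : D₁ → (Z₁ →ₗ[ℂ] PiLp 2 (fun _ : Fin k => X₁)))
    (Φ : D₂ → (Z₂ →ₗ[ℂ] PiLp 2 (fun _ : Fin k => X₂)))
    (_ : ∀ x y, A x y =
      LinearMap.adjoint (Υ x) ∘ₗ piBlock (fun _ : Fin k => Δ x y) ∘ₗ Φ y),
    (⨆ x, ENNReal.ofReal (opNorm (Υ x) ^ 2)) ⊔ (⨆ y, ENNReal.ofReal (opNorm (Φ y) ^ 2))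

/-- The state space `S ⊕ (X ⊗ ℂᵐ)` of a quantum query algorithm with oracle acting on `X`,
where the workspace `W₀` is realized as `ℂᵐ` and `X ⊗ ℂᵐ` as the `ℓ²`-sum of `m` copies
of `X`, and `⊕` is the `ℓ²`-direct sum. -/
abbrev stateSpace (S X : Type*) (m : ℕ) := WithLp 2 (S × PiLp 2 (fun _ : Fin m => X))

/-- The query operator `Q(O) = id_S ⊕ (O ⊗ id)`. -/
noncomputable def queryOp {X S : Type*}
    [NormedAddCommGroup X] [InnerProductSpace ℂ X]
    [NormedAddCommGroup S] [InnerProductSpace ℂ S]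
    (m : ℕ) (O : X →ₗ[ℂ] X) : stateSpace S X m →ₗ[ℂ] stateSpace S X m :=
  (WithLp.linearEquiv 2 ℂ (S × PiLp 2 (fun _ : Fin m => X))).symm.toLinearMap ∘ₗ
    (LinearMap.prodMap LinearMap.id (piBlock (fun _ : Fin m => O))) ∘ₗ
      (WithLp.linearEquiv 2 ℂ (S × PiLp 2 (fun _ : Fin m => X))).toLinearMap

/-- The unitary `A(O) = U_T ∘ Q(O)^{ε_T} ∘ ⋯ ∘ U_1 ∘ Q(O)^{ε_1} ∘ U_0` implemented by a
`T`-query algorithm with unitaries `U` and query signs `sgn` (`true` = direct query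
`Q(O)`, `false` = reverse query `Q(O)⁻¹ = Q(O*)`), run with input oracle `O`. -/
noncomputable def runAlg {X S : Type*}
    [NormedAddCommGroup X] [InnerProductSpace ℂ X] [FiniteDimensional ℂ X]
    [NormedAddCommGroup S] [InnerProductSpace ℂ S]
    (m : ℕ) :
    (T : ℕ) → (Fin (T + 1) → (stateSpace S X m →ₗ[ℂ] stateSpace S X m)) →
      (Fin T → Bool) → (X →ₗ[ℂ] X) →
      (stateSpace S X m →ₗ[ℂ] stateSpace S X m)
  | 0, U, _, _ => U 0
  | T + 1, U, sgn, O =>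
      U (Fin.last (T + 1)) ∘ₗ
        ((if sgn (Fin.last T) then queryOp m O else queryOp m (LinearMap.adjoint O)) ∘ₗ
          runAlg m T (fun t => U t.castSucc) (fun t => sgn t.castSucc) O)

/-!
A query changes the Gram matrix `⟪ψ_x, ψ_y⟫` of the current states by
`⟪a_x, ((O_x - O_y) ⊗ id) b_y⟫` with `‖a_x‖ ≤ ‖ψ_x‖` and `‖b_y‖ ≤ ‖ψ_y‖`, where `a_x` depends
only on `x` and `b_y` only on `y`; the unitaries `U_t` do not change it. Over the `T` queries these
changes telescope to `⟪ρ_x, ρ_y⟫ - ⟪σ_x, σ_y⟫`, and stacking the `T` pairs into vectors of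
`ℂ^{Tm} ⊗ X` of squared norm at most `T` gives a factorization witnessing `γ₂ ≤ T`.
-/

open scoped InnerProductSpace

section Unitary

variable {E : Type*} [NormedAddCommGroup E] [InnerProductSpace ℂ E] [FiniteDimensional ℂ E]
  {f : E →ₗ[ℂ] E}

theorem IsUnitaryMap.adjoint_apply_apply (hf : IsUnitaryMap f) (v : E) :
    LinearMap.adjoint f (f v) = v :=
  LinearMap.congr_fun hf.1 v

theorem IsUnitaryMap.apply_adjoint_apply (hf : IsUnitaryMap f) (v : E) :
    f (LinearMap.adjoint f v) = v :=
  LinearMap.congr_fun hf.2 v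

theorem IsUnitaryMap.inner_map_map (hf : IsUnitaryMap f) (v w : E) :
    ⟪f v, f w⟫_ℂ = ⟪v, w⟫_ℂ := by
  rw [← LinearMap.adjoint_inner_left, hf.adjoint_apply_apply]

theorem IsUnitaryMap.adjoint (hf : IsUnitaryMap f) : IsUnitaryMap (LinearMap.adjoint f) := by
  rw [IsUnitaryMap, LinearMap.adjoint_adjoint]
  exact hf.symm

theorem IsUnitaryMap.inner_sub_inner_map_map {g : E →ₗ[ℂ] E} (hf : IsUnitaryMap f) (v w : E) :
    ⟪v, w⟫_ℂ - ⟪f v, g w⟫_ℂ = ⟪f v, (f - g) w⟫_ℂ := by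
  rw [LinearMap.sub_apply, inner_sub_right, hf.inner_map_map]

theorem IsUnitaryMap.inner_sub_inner_adjoint_adjoint {g : E →ₗ[ℂ] E} (hg : IsUnitaryMap g)
    (v w : E) :
    ⟪v, w⟫_ℂ - ⟪LinearMap.adjoint f v, LinearMap.adjoint g w⟫_ℂ
      = ⟪v, (f - g) (-LinearMap.adjoint g w)⟫_ℂ := by
  rw [LinearMap.adjoint_inner_left, map_neg, LinearMap.sub_apply, hg.apply_adjoint_apply,
    inner_neg_right, inner_sub_right]
  ring

end Unitary

section PiBlock

variable {ι : Type*} [Fintype ι] {X₁ X₂ : Type*}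
  [NormedAddCommGroup X₁] [InnerProductSpace ℂ X₁] [NormedAddCommGroup X₂] [InnerProductSpace ℂ X₂]

@[simp]
theorem piBlock_apply (Δ : ι → (X₂ →ₗ[ℂ] X₁)) (w : PiLp 2 (fun _ : ι => X₂)) (i : ι) :
    piBlock Δ w i = Δ i (w i) := rfl

theorem inner_piBlock_piBlock {O : X₁ →ₗ[ℂ] X₁} [FiniteDimensional ℂ X₁] (hO : IsUnitaryMap O)
    (v w : PiLp 2 (fun _ : ι => X₁)) :
    ⟪piBlock (fun _ => O) v, piBlock (fun _ => O) w⟫_ℂ = ⟪v, w⟫_ℂ := by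
  simp only [PiLp.inner_apply, piBlock_apply, hO.inner_map_map]

theorem norm_piBlock {O : X₁ →ₗ[ℂ] X₁} [FiniteDimensional ℂ X₁] (hO : IsUnitaryMap O)
    (v : PiLp 2 (fun _ : ι => X₁)) : ‖piBlock (fun _ => O) v‖ = ‖v‖ := by
  rw [@norm_eq_sqrt_re_inner ℂ, @norm_eq_sqrt_re_inner ℂ, inner_piBlock_piBlock hO]

end PiBlock

section Query

variable {X S : Type*} [NormedAddCommGroup X] [InnerProductSpace ℂ X]
  [NormedAddCommGroup S] [InnerProductSpace ℂ S] {m : ℕ}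

@[simp]
theorem queryOp_fst (O : X →ₗ[ℂ] X) (φ : stateSpace S X m) : (queryOp m O φ).fst = φ.fst := rfl

@[simp]
theorem queryOp_snd (O : X →ₗ[ℂ] X) (φ : stateSpace S X m) :
    (queryOp m O φ).snd = piBlock (fun _ => O) φ.snd := rfl

theorem inner_sub_inner_queryOp_eq_sum (A B : X →ₗ[ℂ] X) (φ ψ : stateSpace S X m) :
    ⟪φ, ψ⟫_ℂ - ⟪queryOp m A φ, queryOp m B ψ⟫_ℂ
      = ∑ i, (⟪φ.snd i, ψ.snd i⟫_ℂ - ⟪A (φ.snd i), B (ψ.snd i)⟫_ℂ) := by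
  simp only [WithLp.prod_inner_apply, WithLp.ofLp_fst, WithLp.ofLp_snd, queryOp_fst,
    queryOp_snd, PiLp.inner_apply, piBlock_apply, Finset.sum_sub_distrib]
  ring

variable [FiniteDimensional ℂ X]

theorem inner_queryOp_queryOp {O : X →ₗ[ℂ] X} (hO : IsUnitaryMap O) (φ ψ : stateSpace S X m) :
    ⟪queryOp m O φ, queryOp m O ψ⟫_ℂ = ⟪φ, ψ⟫_ℂ := by
  rw [eq_comm, ← sub_eq_zero, inner_sub_inner_queryOp_eq_sum]
  simp only [hO.inner_map_map, sub_self, Finset.sum_const_zero]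

theorem inner_sub_inner_queryOp {A B : X →ₗ[ℂ] X} (hA : IsUnitaryMap A)
    (φ ψ : stateSpace S X m) :
    ⟪φ, ψ⟫_ℂ - ⟪queryOp m A φ, queryOp m B ψ⟫_ℂ
      = ⟪piBlock (fun _ => A) φ.snd, piBlock (fun _ => A - B) ψ.snd⟫_ℂ := by
  simp only [inner_sub_inner_queryOp_eq_sum, hA.inner_sub_inner_map_map, PiLp.inner_apply,
    piBlock_apply]

theorem inner_sub_inner_queryOp_adjoint {A B : X →ₗ[ℂ] X} (hB : IsUnitaryMap B)
    (φ ψ : stateSpace S X m) :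
    ⟪φ, ψ⟫_ℂ - ⟪queryOp m (LinearMap.adjoint A) φ, queryOp m (LinearMap.adjoint B) ψ⟫_ℂ
      = ⟪φ.snd, piBlock (fun _ => A - B) (-piBlock (fun _ => LinearMap.adjoint B) ψ.snd)⟫_ℂ := by
  simp only [inner_sub_inner_queryOp_eq_sum, hB.inner_sub_inner_adjoint_adjoint, PiLp.inner_apply,
    piBlock_apply, PiLp.neg_apply]

def signedQueryOp (m : ℕ) (s : Bool) (O : X →ₗ[ℂ] X) : stateSpace S X m →ₗ[ℂ] stateSpace S X m :=
  if s then queryOp m O else queryOp m (LinearMap.adjoint O)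

theorem runAlg_succ (T : ℕ) (U : Fin (T + 2) → (stateSpace S X m →ₗ[ℂ] stateSpace S X m))
    (sgn : Fin (T + 1) → Bool) (O : X →ₗ[ℂ] X) :
    runAlg m (T + 1) U sgn O = U (Fin.last (T + 1)) ∘ₗ signedQueryOp m (sgn (Fin.last T)) O ∘ₗ
      runAlg m T (fun t => U t.castSucc) (fun t => sgn t.castSucc) O := rfl

theorem inner_signedQueryOp {O : X →ₗ[ℂ] X} (hO : IsUnitaryMap O) (s : Bool)
    (φ ψ : stateSpace S X m) :
    ⟪signedQueryOp m s O φ, signedQueryOp m s O ψ⟫_ℂ = ⟪φ, ψ⟫_ℂ := by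
  cases s
  · exact inner_queryOp_queryOp hO.adjoint φ ψ
  · exact inner_queryOp_queryOp hO φ ψ

theorem exists_inner_sub_inner_signedQueryOp {D : Type*} (s : Bool) {O : D → (X →ₗ[ℂ] X)}
    (hO : ∀ x, IsUnitaryMap (O x)) (ψ : D → stateSpace S X m) :
    ∃ L R : D → PiLp 2 (fun _ : Fin m => X),
      (∀ x, ‖L x‖ ≤ ‖ψ x‖) ∧ (∀ y, ‖R y‖ ≤ ‖ψ y‖) ∧
      ∀ x y, ⟪ψ x, ψ y⟫_ℂ - ⟪signedQueryOp m s (O x) (ψ x), signedQueryOp m s (O y) (ψ y)⟫_ℂ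
        = ⟪L x, piBlock (fun _ => O x - O y) (R y)⟫_ℂ := by
  cases s
  · refine ⟨fun x => (ψ x).snd, fun y => -piBlock (fun _ => LinearMap.adjoint (O y)) (ψ y).snd,
      fun x => WithLp.norm_snd_le _ _, fun y => ?_,
      fun x y => inner_sub_inner_queryOp_adjoint (hO y) _ _⟩
    rw [norm_neg, norm_piBlock (hO y).adjoint]
    exact WithLp.norm_snd_le _ _
  · refine ⟨fun x => piBlock (fun _ => O x) (ψ x).snd, fun y => (ψ y).snd, fun x => ?_,
      fun y => WithLp.norm_snd_le _ _,
      fun x y => inner_sub_inner_queryOp (hO x) _ _⟩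
    rw [norm_piBlock (hO x)]
    exact WithLp.norm_snd_le _ _

variable [FiniteDimensional ℂ S]

theorem inner_runAlg_runAlg {T : ℕ} {U : Fin (T + 1) → (stateSpace S X m →ₗ[ℂ] stateSpace S X m)}
    (hU : ∀ t, IsUnitaryMap (U t)) (sgn : Fin T → Bool) {O : X →ₗ[ℂ] X} (hO : IsUnitaryMap O)
    (φ ψ : stateSpace S X m) :
    ⟪runAlg m T U sgn O φ, runAlg m T U sgn O ψ⟫_ℂ = ⟪φ, ψ⟫_ℂ := by
  induction T with
  | zero => exact (hU 0).inner_map_map φ ψ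
  | succ T ih =>
    simp only [runAlg_succ, LinearMap.comp_apply]
    rw [(hU _).inner_map_map, inner_signedQueryOp hO, ih (fun t => hU t.castSucc)]

theorem norm_runAlg {T : ℕ} {U : Fin (T + 1) → (stateSpace S X m →ₗ[ℂ] stateSpace S X m)}
    (hU : ∀ t, IsUnitaryMap (U t)) (sgn : Fin T → Bool) {O : X →ₗ[ℂ] X} (hO : IsUnitaryMap O)
    (φ : stateSpace S X m) : ‖runAlg m T U sgn O φ‖ = ‖φ‖ := by
  rw [@norm_eq_sqrt_re_inner ℂ, @norm_eq_sqrt_re_inner ℂ, inner_runAlg_runAlg hU sgn hO]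

theorem exists_inner_sub_inner_runAlg {D : Type*} (T : ℕ)
    {U : Fin (T + 1) → (stateSpace S X m →ₗ[ℂ] stateSpace S X m)} (hU : ∀ t, IsUnitaryMap (U t))
    (sgn : Fin T → Bool) {O : D → (X →ₗ[ℂ] X)} (hO : ∀ x, IsUnitaryMap (O x))
    (ρ : D → stateSpace S X m) :
    ∃ α β : D → Fin T → PiLp 2 (fun _ : Fin m => X),
      (∀ x t, ‖α x t‖ ≤ ‖ρ x‖) ∧ (∀ y t, ‖β y t‖ ≤ ‖ρ y‖) ∧
      ∀ x y, ⟪ρ x, ρ y⟫_ℂ - ⟪runAlg m T U sgn (O x) (ρ x), runAlg m T U sgn (O y) (ρ y)⟫_ℂ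
        = ∑ t, ⟪α x t, piBlock (fun _ => O x - O y) (β y t)⟫_ℂ := by
  induction T with
  | zero =>
    refine ⟨fun _ => Fin.elim0, fun _ => Fin.elim0, fun _ t => t.elim0, fun _ t => t.elim0,
      fun x y => ?_⟩
    rw [runAlg, runAlg, (hU 0).inner_map_map, sub_self, Finset.univ_eq_empty,
      Finset.sum_empty]
  | succ T ih =>
    obtain ⟨α, β, hα, hβ, hαβ⟩ := ih (fun t => hU t.castSucc) (fun t => sgn t.castSucc)
    set ψ := fun x => runAlg m T (fun t => U t.castSucc) (fun t => sgn t.castSucc) (O x) (ρ x)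
    have hψ : ∀ x, ‖ψ x‖ = ‖ρ x‖ := fun x => norm_runAlg (fun t => hU t.castSucc) _ (hO x) _
    obtain ⟨L, R, hL, hR, hLR⟩ := exists_inner_sub_inner_signedQueryOp (sgn (Fin.last T)) hO ψ
    refine ⟨fun x => Fin.snoc (α x) (L x), fun y => Fin.snoc (β y) (R y), ?_, ?_, fun x y => ?_⟩
    · intro x t
      induction t using Fin.lastCases with
      | last => simpa only [Fin.snoc_last, hψ] using hL x
      | cast t => simpa only [Fin.snoc_castSucc] using hα x t
    · intro y t
      induction t using Fin.lastCases with
      | last => simpa only [Fin.snoc_last, hψ] using hR y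
      | cast t => simpa only [Fin.snoc_castSucc] using hβ y t
    · rw [Fin.sum_univ_castSucc]
      simp only [Fin.snoc_castSucc, Fin.snoc_last, ← hαβ, ← hLR, runAlg_succ,
        LinearMap.comp_apply]
      rw [(hU _).inner_map_map]
      ring

end Query

theorem opNorm_toSpanSingleton {E : Type*} [NormedAddCommGroup E] [InnerProductSpace ℂ E]
    (w : E) : opNorm (LinearMap.toSpanSingleton ℂ E w) = ‖w‖ :=
  ContinuousLinearMap.norm_toSpanSingleton w

theorem sum_finProdFinEquiv_symm {M : Type*} [AddCommMonoid M] {T m : ℕ}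
    (f : Fin T → Fin m → M) :
    ∑ j : Fin (T * m), f (finProdFinEquiv.symm j).1 (finProdFinEquiv.symm j).2
      = ∑ t, ∑ i, f t i := by
  rw [finProdFinEquiv.symm.sum_comp (fun p => f p.1 p.2), Fintype.sum_prod_type]

section BlockVectors

variable {X₁ X₂ : Type*} [NormedAddCommGroup X₁] [NormedAddCommGroup X₂] {T m : ℕ}

/-- The isometry `ℂᵀ ⊗ (ℂᵐ ⊗ X) ≅ ℂ^{Tm} ⊗ X`, on vectors. -/
def flattenBlocks (α : Fin T → PiLp 2 (fun _ : Fin m => X₁)) :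
    PiLp 2 (fun _ : Fin (T * m) => X₁) :=
  WithLp.toLp 2 fun j => α (finProdFinEquiv.symm j).1 (finProdFinEquiv.symm j).2

theorem norm_sq_flattenBlocks (α : Fin T → PiLp 2 (fun _ : Fin m => X₁)) :
    ‖flattenBlocks α‖ ^ 2 = ∑ t, ‖α t‖ ^ 2 := by
  simp only [PiLp.norm_sq_eq_of_L2]
  exact sum_finProdFinEquiv_symm fun t i => ‖α t i‖ ^ 2

theorem norm_sq_flattenBlocks_le {α : Fin T → PiLp 2 (fun _ : Fin m => X₁)}
    (hα : ∀ t, ‖α t‖ ≤ 1) : ‖flattenBlocks α‖ ^ 2 ≤ T := by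
  rw [norm_sq_flattenBlocks]
  calc ∑ t, ‖α t‖ ^ 2 ≤ ∑ _t : Fin T, (1 : ℝ) :=
        Finset.sum_le_sum fun t _ => pow_le_one₀ (norm_nonneg _) (hα t)
    _ = T := by simp

variable [InnerProductSpace ℂ X₁] [InnerProductSpace ℂ X₂]

theorem inner_flattenBlocks_piBlock (Δ : X₂ →ₗ[ℂ] X₁) (α : Fin T → PiLp 2 (fun _ : Fin m => X₁))
    (β : Fin T → PiLp 2 (fun _ : Fin m => X₂)) :
    ⟪flattenBlocks α, piBlock (fun _ => Δ) (flattenBlocks β)⟫_ℂ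
      = ∑ t, ⟪α t, piBlock (fun _ => Δ) (β t)⟫_ℂ := by
  simp only [PiLp.inner_apply, piBlock_apply]
  exact sum_finProdFinEquiv_symm fun t i => ⟪α t i, Δ (β t i)⟫_ℂ

theorem relGamma2_scalarMap_le {D₁ D₂ : Type*} [Fintype D₁] [Fintype D₂]
    [FiniteDimensional ℂ X₁] [FiniteDimensional ℂ X₂] {k : ℕ}
    (c : D₁ → D₂ → ℂ) (Δ : D₁ → D₂ → (X₂ →ₗ[ℂ] X₁))
    (u : D₁ → PiLp 2 (fun _ : Fin k => X₁)) (v : D₂ → PiLp 2 (fun _ : Fin k => X₂))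
    (huv : ∀ x y, c x y = ⟪u x, piBlock (fun _ => Δ x y) (v y)⟫_ℂ) {r : ℝ}
    (hu : ∀ x, ‖u x‖ ^ 2 ≤ r) (hv : ∀ y, ‖v y‖ ^ 2 ≤ r) :
    relGamma2 (fun x y => scalarMap (c x y)) Δ ≤ ENNReal.ofReal r := by
  refine iInf_le_of_le k <| iInf_le_of_le (fun x => LinearMap.toSpanSingleton ℂ _ (u x)) <|
    iInf_le_of_le (fun y => LinearMap.toSpanSingleton ℂ _ (v y)) <|
    iInf_le_of_le (fun x y => ?_) ?_
  · ext
    simp [scalarMap, LinearMap.adjoint_toSpanSingleton, huv]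
  · simp only [opNorm_toSpanSingleton]
    exact sup_le (iSup_le fun x => ENNReal.ofReal_le_ofReal (hu x))
      (iSup_le fun y => ENNReal.ofReal_le_ofReal (hv y))

end BlockVectors

theorem statement9_general {D : Type} [Fintype D] {X S : Type}
    [NormedAddCommGroup X] [InnerProductSpace ℂ X] [FiniteDimensional ℂ X]
    [NormedAddCommGroup S] [InnerProductSpace ℂ S] [FiniteDimensional ℂ S]
    (m T : ℕ)
    (O : D → (X →ₗ[ℂ] X)) (hO : ∀ x, IsUnitaryMap (O x))
    (U : Fin (T + 1) → (stateSpace S X m →ₗ[ℂ] stateSpace S X m))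
    (hU : ∀ t, IsUnitaryMap (U t)) (sgn : Fin T → Bool)
    (ρ σ : D → stateSpace S X m)
    (hρ : ∀ x, ‖ρ x‖ = 1)
    (hrun : ∀ x, runAlg m T U sgn (O x) (ρ x) = σ x) :
    relGamma2
      (fun x y => scalarMap ((inner ℂ (ρ x) (ρ y) : ℂ) - (inner ℂ (σ x) (σ y) : ℂ)))
      (fun x y => O x - O y) ≤ (T : ℝ≥0∞) := by
  obtain ⟨α, β, hα, hβ, hαβ⟩ := exists_inner_sub_inner_runAlg T hU sgn hO ρ
  have hfactor : ∀ x y, ⟪ρ x, ρ y⟫_ℂ - ⟪σ x, σ y⟫_ℂ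
      = ⟪flattenBlocks (α x), piBlock (fun _ => O x - O y) (flattenBlocks (β y))⟫_ℂ := by
    intro x y
    rw [inner_flattenBlocks_piBlock, ← hαβ, hrun, hrun]
  calc _ ≤ ENNReal.ofReal T :=
        relGamma2_scalarMap_le _ _ _ _ hfactor
          (fun x => norm_sq_flattenBlocks_le fun t => (hα x t).trans_eq (hρ x))
          (fun y => norm_sq_flattenBlocks_le fun t => (hβ y t).trans_eq (hρ y))
    _ = T := ENNReal.ofReal_natCast T

/-- Adversary lower bound for exact state conversion: if a `T`-query
quantum algorithm with oracle acting on `X` converts the unit vector `ρ_x` into the unit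
vector `σ_x` whenever its oracle is replaced by the unitary `O_x` (for every `x ∈ D`),
then `γ₂(⟨ρ_x,ρ_y⟩ − ⟨σ_x,σ_y⟩ | O_x − O_y) ≤ T`. -/
theorem statement9 {D : Type} [Fintype D] {X S : Type}
    [NormedAddCommGroup X] [InnerProductSpace ℂ X] [FiniteDimensional ℂ X]
    [NormedAddCommGroup S] [InnerProductSpace ℂ S] [FiniteDimensional ℂ S]
    (m T : ℕ)
    (O : D → (X →ₗ[ℂ] X)) (hO : ∀ x, IsUnitaryMap (O x))
    (U : Fin (T + 1) → (stateSpace S X m →ₗ[ℂ] stateSpace S X m))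
    (hU : ∀ t, IsUnitaryMap (U t)) (sgn : Fin T → Bool)
    (ρ σ : D → stateSpace S X m)
    (hρ : ∀ x, ‖ρ x‖ = 1) (hσ : ∀ x, ‖σ x‖ = 1)
    (hrun : ∀ x, runAlg m T U sgn (O x) (ρ x) = σ x) :
    relGamma2
      (fun x y => scalarMap ((inner ℂ (ρ x) (ρ y) : ℂ) - (inner ℂ (σ x) (σ y) : ℂ)))
      (fun x y => O x - O y) ≤ (T : ℝ≥0∞) :=
  statement9_general m T O hO U hU sgn ρ σ hρ hrun

end
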